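/- Let m ≥ 1, t ∈ ℝ, ξ ∈ 𝕊^{2m+1}, and let φ(z) = |cosh t + sinh t (z·ξ̄)|² on 𝕊^{2m+1}. Then for every z ∈ 𝕊^{2m+1}: T(Tφ)(z) = (1/2) φ(z)^{−1} [ (1 − φ(z)²)/4 + φ(z)^{−1}|∂φ|²(z) + φ(z)^{−2}|∂φ|⁴(z) + (Tφ(z))² ], where |∂φ|⁴ = (|∂φ|²)². -/

import Mathlib

noncomputable section

/-- The hermitian pairing `z·ξ̄ = Σ_j z_j conj(ξ_j)` on `ℂ^{m+1}`
(note Mathlib's `inner` is conjugate-linear in the first slot). -/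
def hprod {m : ℕ} (z ξ : EuclideanSpace ℂ (Fin (m+1))) : ℂ := inner ℂ ξ z

/-- The degree-zero homogeneous extension of a function on the unit sphere
`𝕊^{2m+1} ⊂ ℂ^{m+1}`: `F̃(y) = F(y/‖y‖)`. -/
def sphExtC {m : ℕ} (F : EuclideanSpace ℂ (Fin (m+1)) → ℝ)
    (y : EuclideanSpace ℂ (Fin (m+1))) : ℝ :=
  F (‖y‖⁻¹ • y)

/-- Second directional derivative of `F` at `x` in direction `v`. -/
def dir2 {V : Type*} [NormedAddCommGroup V] [NormedSpace ℝ V]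
    (F : V → ℝ) (x v : V) : ℝ :=
  fderiv ℝ (fun y => fderiv ℝ F y v) x v

/-- The Euclidean Laplacian on `ℂ^{m+1} ≅ ℝ^{2m+2}`, computed in the real orthonormal
basis `{e_j, i·e_j}`. -/
def lapC {m : ℕ} (F : EuclideanSpace ℂ (Fin (m+1)) → ℝ)
    (z : EuclideanSpace ℂ (Fin (m+1))) : ℝ :=
  ∑ j : Fin (m+1),
    (dir2 F z (EuclideanSpace.single j 1) + dir2 F z (EuclideanSpace.single j Complex.I))

/-- The Reeb derivative `TF(z) = d/ds|_{s=0} F(e^{is/2} z)` for the canonical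
pseudohermitian structure on `𝕊^{2m+1}`. -/
def reeb {m : ℕ} (F : EuclideanSpace ℂ (Fin (m+1)) → ℝ)
    (z : EuclideanSpace ℂ (Fin (m+1))) : ℝ :=
  deriv (fun s : ℝ => F (Complex.exp (Complex.I * s / 2) • z)) 0

/-- The CR sub-Laplacian of `(𝕊^{2m+1}, θ_c)`:
`Δ_b F(z) = (1/4) Δ_{ℝ^{2m+2}} F̃(z) − T(TF)(z)`. -/
def subLapC {m : ℕ} (F : EuclideanSpace ℂ (Fin (m+1)) → ℝ)
    (z : EuclideanSpace ℂ (Fin (m+1))) : ℝ :=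
  (1 / 4) * lapC (sphExtC F) z - reeb (reeb (sphExtC F)) z

/-- Orthogonal projection onto the holomorphic tangent (horizontal) space
`H_z = {w : Σ_j w_j conj(z_j) = 0}` at a point `z` of the unit sphere. -/
def projH {m : ℕ} (z w : EuclideanSpace ℂ (Fin (m+1))) : EuclideanSpace ℂ (Fin (m+1)) :=
  w - (inner ℂ z w : ℂ) • z

/-- `|∂F|²(z) = (1/8)|P_{H_z}(∇F̃(z))|²`, the squared norm of `∂_b F` with respect to the
canonical pseudohermitian structure `θ_c`. -/
def delbSq {m : ℕ} (F : EuclideanSpace ℂ (Fin (m+1)) → ℝ)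
    (z : EuclideanSpace ℂ (Fin (m+1))) : ℝ :=
  (1 / 8) * ‖projH z (gradient (sphExtC F) z)‖ ^ 2


/-!
Write `a = cosh t`, `b = sinh t` and `w = z·ξ̄`, so `φ = |a + b w|²`. The Reeb flow rotates `w`
to `e^{is/2} w`, which gives `Tφ = -ab Im w` and `T(Tφ) = -ab Re w / 2`. On the sphere the
derivative of `y ↦ y/|y|` is the tangential projection, and `P_H` kills multiples of `z`, so
`P_H ∇φ̃ = P_H ∇φ = 2b(a + bw) P_H ξ`, whence `|∂φ|² = b² φ (1 - |w|²) / 2`. The claimed formula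
is then a polynomial identity in `a, b, Re w, Im w` modulo `a² - b² = 1`.
-/
open Complex
open scoped RealInnerProductSpace

section Normalize
variable {E : Type*} [NormedAddCommGroup E] [InnerProductSpace ℝ E] {z : E}

theorem hasFDerivAt_norm_of_norm_eq_one (hz : ‖z‖ = 1) :
    HasFDerivAt (fun y : E => ‖y‖) (innerSL ℝ z) z := by
  have h := (hasStrictFDerivAt_norm_sq z).hasFDerivAt.sqrt (by simp [hz])
  simp only [Real.sqrt_sq (norm_nonneg _), hz] at h
  convert h using 1
  ext y; simp

theorem hasFDerivAt_normalize (hz : ‖z‖ = 1) :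
    HasFDerivAt (fun y : E => ‖y‖⁻¹ • y)
      (ContinuousLinearMap.id ℝ E - (innerSL ℝ z).smulRight z) z := by
  have hinv := (hasDerivAt_inv (by simp [hz] : ‖z‖ ≠ 0)).comp_hasFDerivAt z
    (hasFDerivAt_norm_of_norm_eq_one hz)
  refine (hinv.smul (hasFDerivAt_id z)).congr_fderiv ?_
  ext y
  simp [hz, sub_eq_add_neg]

theorem HasGradientAt.comp_normalize [CompleteSpace E] {F : E → ℝ} {G : E}
    (hF : HasGradientAt F G z) (hz : ‖z‖ = 1) :
    HasGradientAt (fun y => F (‖y‖⁻¹ • y)) (G - ⟪z, G⟫ • z) z := by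
  have hF' : HasFDerivAt F (InnerProductSpace.toDual ℝ E G) (‖z‖⁻¹ • z) := by
    simpa [hz] using hF.hasFDerivAt
  have h := HasFDerivAt.comp (f := fun y : E => ‖y‖⁻¹ • y) z hF' (hasFDerivAt_normalize hz)
  refine hasGradientAt_iff_hasFDerivAt.mpr (h.congr_fderiv ?_)
  ext y
  simp only [ContinuousLinearMap.comp_sub, ContinuousLinearMap.comp_id, sub_apply,
    InnerProductSpace.toDual_apply_apply, ContinuousLinearMap.comp_apply,
    ContinuousLinearMap.smulRight_apply, coe_innerSL_apply, map_smul, real_inner_comm, smul_eq_mul,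
    map_sub, smul_apply, sub_right_inj]
  ring

end Normalize

section Sphere
variable {m : ℕ}

theorem hprod_smul_left (c : ℂ) (z ξ : EuclideanSpace ℂ (Fin (m+1))) :
    hprod (c • z) ξ = c * hprod z ξ :=
  inner_smul_right _ _ _

theorem hasDerivAt_cexp_I_mul_half :
    HasDerivAt (fun s : ℝ => cexp (I * s / 2)) (I / 2) 0 := by
  have h : HasDerivAt (fun s : ℝ => I * (s : ℂ) / 2) (I / 2) 0 := by
    simpa using ((hasDerivAt_id (0 : ℝ)).ofReal_comp.const_mul I).div_const 2
  simpa using h.cexp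

theorem reeb_comp_hprod {g : ℂ → ℝ} {g' : ℂ →L[ℝ] ℝ} (ξ z : EuclideanSpace ℂ (Fin (m+1)))
    (hg : HasFDerivAt g g' (hprod z ξ)) :
    reeb (fun y => g (hprod y ξ)) z = g' (I / 2 * hprod z ξ) := by
  have hrot : HasDerivAt (fun s : ℝ => cexp (I * s / 2) * hprod z ξ) (I / 2 * hprod z ξ) 0 :=
    hasDerivAt_cexp_I_mul_half.mul_const _
  have hg' : HasFDerivAt g g' (cexp (I * (0 : ℝ) / 2) * hprod z ξ) := by simpa using hg
  simp only [reeb, hprod_smul_left]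
  exact (hg'.comp_hasDerivAt (0 : ℝ) hrot).deriv

theorem reeb_sq_norm_affine_hprod (a b : ℝ) (ξ z : EuclideanSpace ℂ (Fin (m+1))) :
    reeb (fun y => ‖(a : ℂ) + b * hprod y ξ‖ ^ 2) z = -(a * b) * (hprod z ξ).im := by
  have hg : HasFDerivAt (fun u : ℂ => ‖(a : ℂ) + b * u‖ ^ 2) _ (hprod z ξ) :=
    (((hasFDerivAt_id (hprod z ξ)).const_smul (b : ℂ)).const_add (a : ℂ)).norm_sq
  rw [reeb_comp_hprod ξ z hg]
  simp [Complex.inner]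
  ring

theorem reeb_im_hprod (c : ℝ) (ξ z : EuclideanSpace ℂ (Fin (m+1))) :
    reeb (fun y => c * (hprod y ξ).im) z = c * (hprod z ξ).re / 2 := by
  have hg : HasFDerivAt (fun u : ℂ => c * u.im) (c • imCLM) (hprod z ξ) := (c • imCLM).hasFDerivAt
  rw [reeb_comp_hprod ξ z hg]
  simp only [smul_apply, imCLM_apply, mul_im, div_ofNat_re, I_re, zero_div, zero_mul, div_ofNat_im,
    I_im, one_div, zero_add, smul_eq_mul]
  ring

theorem real_inner_eq_re_inner_euclidean (x y : EuclideanSpace ℂ (Fin (m+1))) :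
    ⟪x, y⟫ = (inner ℂ x y).re := by
  simp [PiLp.inner_apply, Complex.inner, RCLike.inner_apply, Complex.re_sum]

theorem hasGradientAt_sphExtC {F : EuclideanSpace ℂ (Fin (m+1)) → ℝ}
    {G z : EuclideanSpace ℂ (Fin (m+1))} (hF : HasGradientAt F G z) (hz : ‖z‖ = 1) :
    HasGradientAt (sphExtC F) (G - ⟪z, G⟫ • z) z :=
  hF.comp_normalize hz

theorem projH_smul (c : ℂ) (z w : EuclideanSpace ℂ (Fin (m+1))) :
    projH z (c • w) = c • projH z w := by
  simp only [projH, inner_smul_right, smul_sub, mul_smul]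

theorem projH_sub_smul_self {z : EuclideanSpace ℂ (Fin (m+1))} (hz : ‖z‖ = 1) (c : ℂ)
    (w : EuclideanSpace ℂ (Fin (m+1))) :
    projH z (w - c • z) = projH z w := by
  have : inner ℂ z z = (1 : ℂ) := by simp [hz]
  simp only [projH, inner_sub_right, inner_smul_right, this]
  module

theorem norm_projH_sq {z ξ : EuclideanSpace ℂ (Fin (m+1))} (hz : ‖z‖ = 1) (hξ : ‖ξ‖ = 1) :
    ‖projH z ξ‖ ^ 2 = 1 - ‖hprod z ξ‖ ^ 2 := by
  have hsymm : ‖hprod z ξ‖ = ‖inner ℂ z ξ‖ := norm_inner_symm ξ z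
  have hcross : inner ℂ ξ (inner ℂ z ξ • z) = ((‖inner ℂ z ξ‖ ^ 2 : ℝ) : ℂ) := by
    rw [inner_smul_right, ← inner_conj_symm z ξ, ← Complex.normSq_eq_norm_sq,
      Complex.normSq_eq_conj_mul_self, Complex.conj_conj, mul_comm]
  rw [projH, @norm_sub_sq ℂ, hcross, norm_smul, hξ, hz, hsymm, RCLike.re_to_complex,
    Complex.ofReal_re]
  ring

theorem delbSq_eq_of_hasGradientAt {F : EuclideanSpace ℂ (Fin (m+1)) → ℝ}
    {G z : EuclideanSpace ℂ (Fin (m+1))} (hF : HasGradientAt F G z) (hz : ‖z‖ = 1) :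
    delbSq F z = 1 / 8 * ‖projH z G‖ ^ 2 := by
  rw [delbSq, (hasGradientAt_sphExtC hF hz).gradient, RCLike.real_smul_eq_coe_smul (K := ℂ),
    projH_sub_smul_self hz]

theorem hasGradientAt_sq_norm_affine_hprod (a b : ℝ) (ξ z : EuclideanSpace ℂ (Fin (m+1))) :
    HasGradientAt (fun y => ‖(a : ℂ) + b * hprod y ξ‖ ^ 2)
      ((2 * b * (a + b * hprod z ξ) : ℂ) • ξ) z := by
  have h : HasFDerivAt (fun y => hprod y ξ) ((innerSL ℂ ξ).restrictScalars ℝ) z :=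
    ((innerSL ℂ ξ).restrictScalars ℝ).hasFDerivAt
  refine hasGradientAt_iff_hasFDerivAt.mpr
    (((h.const_mul (b : ℂ)).const_add (a : ℂ)).norm_sq.congr_fderiv ?_)
  ext y
  simp [real_inner_eq_re_inner_euclidean, Complex.inner, hprod]
  ring

theorem delbSq_sq_norm_affine_hprod (a b : ℝ) {ξ z : EuclideanSpace ℂ (Fin (m+1))}
    (hξ : ‖ξ‖ = 1) (hz : ‖z‖ = 1) :
    delbSq (fun y => ‖(a : ℂ) + b * hprod y ξ‖ ^ 2) z
      = b ^ 2 * ‖(a : ℂ) + b * hprod z ξ‖ ^ 2 * (1 - ‖hprod z ξ‖ ^ 2) / 2 := by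
  rw [delbSq_eq_of_hasGradientAt (hasGradientAt_sq_norm_affine_hprod a b ξ z) hz, projH_smul,
    norm_smul, mul_pow, norm_projH_sq hz hξ]
  simp only [norm_mul, Complex.norm_ofNat, Complex.norm_real, Real.norm_eq_abs, mul_pow, sq_abs]
  ring

end Sphere

theorem Real.abs_sinh_lt_cosh (t : ℝ) : |Real.sinh t| < Real.cosh t := by
  rw [Real.abs_sinh, ← Real.cosh_abs]
  exact Real.sinh_lt_cosh _

theorem cosh_add_sinh_mul_ne_zero (t : ℝ) {w : ℂ} (hw : ‖w‖ ≤ 1) :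
    (Real.cosh t : ℂ) + Real.sinh t * w ≠ 0 := by
  intro h
  have hnorm := congrArg norm (eq_neg_of_add_eq_zero_left h)
  rw [norm_neg, norm_mul, Complex.norm_real, Complex.norm_real, Real.norm_eq_abs,
    Real.norm_eq_abs, abs_of_pos (Real.cosh_pos t)] at hnorm
  nlinarith [Real.abs_sinh_lt_cosh t, abs_nonneg (Real.sinh t), norm_nonneg w]

theorem sq_norm_ofReal_add_ofReal_mul (a b : ℝ) (w : ℂ) :
    ‖(a : ℂ) + b * w‖ ^ 2 = (a + b * w.re) ^ 2 + (b * w.im) ^ 2 := by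
  rw [← Complex.normSq_eq_norm_sq, Complex.normSq_apply]
  simp only [add_re, ofReal_re, mul_re, ofReal_im, zero_mul, sub_zero, add_im, mul_im, add_zero,
    zero_add]
  ring

-- The theorem's formula after substituting `φ`, `Tφ`, `|∂φ|²` in terms of `w = u + iv`.
theorem reeb_reeb_identity {a b u v p : ℝ} (hab : a ^ 2 - b ^ 2 = 1)
    (hp : p = (a + b * u) ^ 2 + (b * v) ^ 2) (hp0 : p ≠ 0) :
    -(a * b) * u / 2 = 1 / 2 * p⁻¹ *
      ((1 - p ^ 2) / 4 + p⁻¹ * (b ^ 2 * p * (1 - (u ^ 2 + v ^ 2)) / 2)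
        + (p⁻¹) ^ 2 * (b ^ 2 * p * (1 - (u ^ 2 + v ^ 2)) / 2) ^ 2 + (-(a * b) * v) ^ 2) := by
  have key : (1 - p ^ 2) / 4 + b ^ 2 * (1 - (u ^ 2 + v ^ 2)) / 2
      + (b ^ 2 * (1 - (u ^ 2 + v ^ 2)) / 2) ^ 2 + (a * b * v) ^ 2 = -(a * b) * u * p := by
    linear_combination ((-1/4) * p + (-1/4) * b^2 * v^2 + (-1/4) * b^2 * u^2 + (1/2) * a * b * u
        + (-1/4) * a^2) * hp
      + ((-1/4) + (-1/4) * b^2 + (1/2) * b^2 * v^2 + (1/2) * b^2 * u^2 + (-1/4) * a^2) * hab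
  field_simp
  linear_combination (-16) * key

theorem stmt15_general (m : ℕ) (t : ℝ)
    (ξ : EuclideanSpace ℂ (Fin (m+1))) (hξ : ‖ξ‖ = 1)
    (φ : EuclideanSpace ℂ (Fin (m+1)) → ℝ)
    (hφ : ∀ z, φ z = ‖(Real.cosh t : ℂ) + (Real.sinh t : ℂ) * hprod z ξ‖ ^ 2) :
    ∀ z : EuclideanSpace ℂ (Fin (m+1)), ‖z‖ = 1 →
      reeb (reeb φ) z
        = (1 / 2) * (φ z)⁻¹ *
            ((1 - (φ z) ^ 2) / 4 + (φ z)⁻¹ * delbSq φ z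
              + ((φ z)⁻¹) ^ 2 * (delbSq φ z) ^ 2 + (reeb φ z) ^ 2) := by
  intro z hz
  obtain rfl : φ = fun y => ‖(Real.cosh t : ℂ) + Real.sinh t * hprod y ξ‖ ^ 2 := funext hφ
  have hw : ‖hprod z ξ‖ ≤ 1 := by simpa [hprod, hξ, hz] using norm_inner_le_norm (𝕜 := ℂ) ξ z
  have hreeb : reeb (fun y => ‖(Real.cosh t : ℂ) + Real.sinh t * hprod y ξ‖ ^ 2)
      = fun y => -(Real.cosh t * Real.sinh t) * (hprod y ξ).im :=
    funext (reeb_sq_norm_affine_hprod _ _ ξ)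
  have hφz := sq_norm_ofReal_add_ofReal_mul (Real.cosh t) (Real.sinh t) (hprod z ξ)
  have hφz0 : ‖(Real.cosh t : ℂ) + Real.sinh t * hprod z ξ‖ ^ 2 ≠ 0 :=
    pow_ne_zero 2 (norm_ne_zero_iff.mpr (cosh_add_sinh_mul_ne_zero t hw))
  rw [hreeb, reeb_im_hprod, delbSq_sq_norm_affine_hprod _ _ hξ hz]
  beta_reduce
  rw [hφz, Complex.sq_norm, Complex.normSq_apply, ← sq, ← sq]
  rw [hφz] at hφz0
  exact reeb_reeb_identity (Real.cosh_sq_sub_sinh_sq t) rfl hφz0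

/-- for `m ≥ 1`, `t ∈ ℝ`, `ξ ∈ 𝕊^{2m+1}` and
`φ(z) = |cosh t + sinh t (z·ξ̄)|²`, one has, at every `z ∈ 𝕊^{2m+1}`,
`φ_{00} = (1/2) φ⁻¹ [ (1 − φ²)/4 + φ⁻¹|∂φ|² + φ⁻²|∂φ|⁴ + φ_0² ]`. -/
theorem stmt15 (m : ℕ) (hm : 1 ≤ m) (t : ℝ)
    (ξ : EuclideanSpace ℂ (Fin (m+1))) (hξ : ‖ξ‖ = 1)
    (φ : EuclideanSpace ℂ (Fin (m+1)) → ℝ)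
    (hφ : ∀ z, φ z = ‖(Real.cosh t : ℂ) + (Real.sinh t : ℂ) * hprod z ξ‖ ^ 2) :
    ∀ z : EuclideanSpace ℂ (Fin (m+1)), ‖z‖ = 1 →
      reeb (reeb φ) z
        = (1 / 2) * (φ z)⁻¹ *
            ((1 - (φ z) ^ 2) / 4 + (φ z)⁻¹ * delbSq φ z
              + ((φ z)⁻¹) ^ 2 * (delbSq φ z) ^ 2 + (reeb φ z) ^ 2) :=
  stmt15_general m t ξ hξ φ hφ
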